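/- If 𝔪₁, …, 𝔪_k are ladder multisegments and 𝔫 ≤ 𝔪₁ + ⋯ + 𝔪_k is a nested sub-multiset (i.e., the segments of 𝔫 are totally ordered by containment), then #𝔫 ≤ k. -/

import Mathlib

/-- A segment is a pair of integers `(a,b)` with `a ≤ b`, viewed as the interval `[a,b] ⊆ ℤ`. -/
abbrev Seg : Type := {p : ℤ × ℤ // p.1 ≤ p.2}

/-- left endpoint -/
def segB (Δ : Seg) : ℤ := Δ.val.1
/-- right endpoint -/
def segE (Δ : Seg) : ℤ := Δ.val.2

/-- the relation `⪯'` -/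
def SegLE (Δ₁ Δ₂ : Seg) : Prop := Δ₁ = Δ₂ ∨ (segB Δ₁ < segB Δ₂ ∧ segE Δ₁ < segE Δ₂)

/-- the relation `≺` ("precedes") -/
def SegPrec (Δ₁ Δ₂ : Seg) : Prop :=
  segB Δ₁ ≤ segB Δ₂ - 1 ∧ segB Δ₂ - 1 ≤ segE Δ₁ ∧ segE Δ₁ < segE Δ₂

/-- containment `Δ₁ ⊆ Δ₂` -/
def SegSub (Δ₁ Δ₂ : Seg) : Prop := segB Δ₂ ≤ segB Δ₁ ∧ segE Δ₁ ≤ segE Δ₂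

/-- a ladder multisegment -/
def IsLadder (m : Multiset Seg) : Prop :=
  ∃ l : List Seg, m = ↑l ∧ l.Chain' (fun Δ₁ Δ₂ => segB Δ₁ < segB Δ₂ ∧ segE Δ₁ < segE Δ₂)

/-- the width of a multisegment: the minimal number of ladder multisegments summing to it -/
noncomputable def width (m : Multiset Seg) : ℕ :=
  sInf {k | ∃ L : List (Multiset Seg), L.length = k ∧ (∀ x ∈ L, IsLadder x) ∧ L.sum = m}


/-! A ladder has strictly increasing left and right endpoints, so it contains neither a repeated
segment nor two distinct nested ones: it meets a nested multisegment in at most one segment.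
Splitting `𝔫 ≤ 𝔪₁ + ⋯ + 𝔪ₖ` as `(𝔫 ∩ 𝔪₁) + (𝔫 - 𝔪₁)` with `𝔫 - 𝔪₁ ≤ 𝔪₂ + ⋯ + 𝔪ₖ` and inducting
gives `#𝔫 ≤ k`. -/

theorem Multiset.card_le_length_of_le_sum {α : Type*} [DecidableEq α] {n : Multiset α}
    {L : List (Multiset α)} (h : n ≤ L.sum) (hL : ∀ m ∈ L, (n ∩ m).card ≤ 1) :
    n.card ≤ L.length := by
  induction L generalizing n with
  | nil => simp_all
  | cons m L ih =>
    have hrest : (n - m).card ≤ L.length := by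
      refine ih (Multiset.sub_le_iff_le_add'.2 (by simpa using h)) fun m' hm' => ?_
      have hsub : (n - m) ∩ m' ≤ n ∩ m' :=
        Multiset.le_inter (Multiset.inter_le_left.trans (Multiset.sub_le_self n m))
          Multiset.inter_le_right
      exact (Multiset.card_le_card hsub).trans (hL m' (List.mem_cons_of_mem m hm'))
    calc n.card = (n - m).card + (n ∩ m).card := by rw [← Multiset.card_add, Multiset.sub_add_inter]
      _ ≤ L.length + 1 := add_le_add hrest (hL m List.mem_cons_self)
      _ = (m :: L).length := rfl

def IsNested (n : Multiset Seg) : Prop := ∀ x ∈ n, ∀ y ∈ n, SegSub x y ∨ SegSub y x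

theorem IsNested.mono {n n' : Multiset Seg} (h : n' ≤ n) (hn : IsNested n) : IsNested n' :=
  fun x hx y hy => hn x (Multiset.mem_of_le h hx) y (Multiset.mem_of_le h hy)

theorem segSub_refl (Δ : Seg) : SegSub Δ Δ := ⟨le_rfl, le_rfl⟩

instance : Trans SegSub SegSub SegSub := ⟨fun h₁ h₂ => ⟨h₂.1.trans h₁.1, h₁.2.trans h₂.2⟩⟩

theorem isNested_coe_of_isChain {l : List Seg} (h : l.IsChain SegSub) : IsNested l := by
  have : Std.Symm fun x y : Seg => SegSub x y ∨ SegSub y x := ⟨fun _ _ h => h.symm⟩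
  exact fun x hx y hy => List.Pairwise.forall_of_forall (R := fun x y => SegSub x y ∨ SegSub y x)
    (fun z _ => Or.inl (segSub_refl z)) ((List.isChain_iff_pairwise.1 h).imp Or.inl) hx hy

def SegLt (Δ₁ Δ₂ : Seg) : Prop := segB Δ₁ < segB Δ₂ ∧ segE Δ₁ < segE Δ₂

instance : Trans SegLt SegLt SegLt := ⟨fun h₁ h₂ => ⟨h₁.1.trans h₂.1, h₁.2.trans h₂.2⟩⟩

instance : Std.Irrefl SegLt := ⟨fun _ h => lt_irrefl _ h.1⟩

namespace IsLadder

variable {m : Multiset Seg}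

theorem exists_pairwise (hm : IsLadder m) : ∃ l : List Seg, m = l ∧ l.Pairwise SegLt := by
  obtain ⟨l, rfl, hl⟩ := hm
  exact ⟨l, rfl, List.isChain_iff_pairwise.1 hl⟩

theorem nodup (hm : IsLadder m) : m.Nodup := by
  obtain ⟨l, rfl, hl⟩ := hm.exists_pairwise
  exact Multiset.coe_nodup.2 hl.nodup

theorem eq_of_segSub {x y : Seg} (hm : IsLadder m) (hx : x ∈ m) (hy : y ∈ m)
    (hxy : SegSub x y) : x = y := by
  obtain ⟨l, rfl, hl⟩ := hm.exists_pairwise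
  have : Std.Symm fun a b : Seg => SegLt a b ∨ SegLt b a := ⟨fun _ _ h => h.symm⟩
  by_contra hne
  have hlt := (hl.imp (S := fun a b => SegLt a b ∨ SegLt b a) Or.inl).forall hx hy hne
  simp only [SegLt, SegSub] at hlt hxy
  omega

theorem card_le_one_of_isNested {n : Multiset Seg} (hm : IsLadder m) (hnm : n ≤ m)
    (hn : IsNested n) : n.card ≤ 1 := by
  rw [← Multiset.toFinset_card_of_nodup (Multiset.nodup_of_le hnm hm.nodup), Finset.card_le_one]
  intro x hx y hy
  simp only [Multiset.mem_toFinset] at hx hy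
  rcases hn x hx y hy with hxy | hyx
  · exact hm.eq_of_segSub (Multiset.mem_of_le hnm hx) (Multiset.mem_of_le hnm hy) hxy
  · exact (hm.eq_of_segSub (Multiset.mem_of_le hnm hy) (Multiset.mem_of_le hnm hx) hyx).symm

end IsLadder

/-- a nested sub-multiset of a sum of `k` ladder multisegments has at most
`k` elements. -/
theorem nested_le_sum_ladders (L : List (Multiset Seg)) (hL : ∀ x ∈ L, IsLadder x)
    (l : List Seg) (hchain : l.Chain' SegSub) (hle : (↑l : Multiset Seg) ≤ L.sum) :
    l.length ≤ L.length := by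
  have hnested : IsNested l := isNested_coe_of_isChain hchain
  simpa using Multiset.card_le_length_of_le_sum hle fun m hm =>
    (hL m hm).card_le_one_of_isNested Multiset.inter_le_right (hnested.mono Multiset.inter_le_left)
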